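/- (Triangle inequality for the monotone index) Let Π, Λ₀, Λ₁, Λ₂ be Lagrangian subspaces of a 2n-dimensional symplectic space, with the index Ind_Π(Λ,Λ') defined (when Λ, Λ', Π are mutually transversal) as ind⁻ q̃, where q̃(λ) = σ(λ₁,λ₀) for λ ∈ Π decomposed as λ = λ₀ + λ₁, λ₀ ∈ Λ, λ₁ ∈ Λ'. Then Ind_Π(Λ₀,Λ₂) ≤ Ind_Π(Λ₀,Λ₁) + Ind_Π(Λ₁,Λ₂). -/

import Mathlib

open Module

noncomputable def negIdx {E : Type*} [AddCommGroup E] [Module ℝ E]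
    (f : E → ℝ) : ℕ :=
  sSup {k | ∃ V : Submodule ℝ E, finrank ℝ V = k ∧ ∀ v ∈ V, v ≠ 0 → f v < 0}

def skewComplement {W : Type*} [AddCommGroup W] [Module ℝ W]
    (σ : W →ₗ[ℝ] W →ₗ[ℝ] ℝ) (Γ : Submodule ℝ W) : Submodule ℝ W where
  carrier := {x | ∀ y ∈ Γ, σ x y = 0}
  add_mem' := by
    intro a b ha hb y hy
    simp [map_add, ha y hy, hb y hy]
  zero_mem' := by
    intro y hy
    simp
  smul_mem' := by
    intro c a ha y hy
    simp [ha y hy]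

/-- `Ind_Pi₀(Λ, Λ')`: the Morse index of the quadratic form
`q̃(λ) = σ(λ₁, λ₀)` on `Pi₀`, where `λ = λ₀ + λ₁`, `λ₀ ∈ Λ`, `λ₁ ∈ Λ'`. -/
noncomputable def indPi {W : Type*} [AddCommGroup W] [Module ℝ W]
    (σ : W →ₗ[ℝ] W →ₗ[ℝ] ℝ) (Pi₀ Λ Λ' : Submodule ℝ W)
    (h : IsCompl Λ Λ') : ℕ :=
  negIdx (fun x : ↥Pi₀ =>
    σ ((x : W) - (Λ.linearProjOfIsCompl Λ' h (x : W) : W))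
      (Λ.linearProjOfIsCompl Λ' h (x : W) : W))

/-!
For `x ∈ Π` write `x = a + c` with `a ∈ Λ₀`, `c ∈ Λ₂`, and then `a = y + l` with `y ∈ Π`,
`l ∈ Λ₁`. The decompositions of `y = a + (-l)` along `(Λ₀, Λ₁)` and of `x - y = l + c` along
`(Λ₁, Λ₂)` give, because `σ` is alternating and `Π` is isotropic,
`σ(c, a) = σ(-l, a) + σ(c, l)`. Writing `q_ij` for the form on `Π` whose index is
`Ind_Π(Λ_i, Λ_j)`, this says `q₀₂ = q₀₁ ∘ T + q₁₂ ∘ (1 - T)` with `T x = y`.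
Transversality makes `T` and `1 - T` injective, so the inequality follows from the
subadditivity of the negative index of quadratic forms (a consequence of Sylvester's law of
inertia) and its monotonicity under injective pullbacks.
-/

namespace QuadraticForm

variable {𝕜 E F : Type*} [Field 𝕜] [LinearOrder 𝕜]
  [AddCommGroup E] [Module 𝕜 E] [FiniteDimensional 𝕜 E] [AddCommGroup F] [Module 𝕜 F]

lemma sigNeg_comp_le_of_injective [FiniteDimensional 𝕜 F] (Q : QuadraticForm 𝕜 E)
    {φ : F →ₗ[𝕜] E} (hφ : Function.Injective φ) : sigNeg (Q.comp φ) ≤ sigNeg Q := by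
  obtain ⟨V, hVdim, hVneg⟩ := exists_finrank_eq_sigNeg_and_negDef (Q.comp φ)
  rw [← hVdim, (Submodule.equivMapOfInjective φ hφ V).finrank_eq]
  refine le_sigNeg_of_negDef Q fun ⟨x, hx⟩ hne => ?_
  obtain ⟨v, hv, rfl⟩ := Submodule.mem_map.mp hx
  exact hVneg ⟨v, hv⟩ fun h => hne (by simp_all)

variable [IsStrictOrderedRing 𝕜]

lemma exists_nonneg_finrank_add_sigNeg_eq (Q : QuadraticForm 𝕜 E) :
    ∃ U : Submodule 𝕜 E, (∀ x ∈ U, 0 ≤ Q x) ∧ finrank 𝕜 U + sigNeg Q = finrank 𝕜 E := by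
  obtain ⟨V, hVdim, hVpos⟩ := exists_finrank_eq_sigPos_and_posDef Q
  have hV : ∀ v ∈ V, 0 ≤ Q v := fun v hv => by
    rcases eq_or_ne v 0 with rfl | hne
    · simp
    · exact (hVpos ⟨v, hv⟩ (by simpa using hne)).le
  have hdisj : Disjoint V Q.radical := by
    rw [Submodule.disjoint_def]
    intro v hv hrad
    by_contra hne
    have := hVpos ⟨v, hv⟩ (by simpa using hne)
    simp [(QuadraticMap.mem_radical_iff'.mp hrad).1] at this
  refine ⟨V ⊔ Q.radical, ?_, ?_⟩
  · intro x hx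
    obtain ⟨v, hv, r, hr, rfl⟩ := Submodule.mem_sup.mp hx
    rw [add_comm, (QuadraticMap.mem_radical_iff'.mp hr).2]
    exact hV v hv
  · have := Submodule.finrank_sup_add_finrank_inf_eq V Q.radical
    rw [hdisj.eq_bot, finrank_bot] at this
    have := sigPos_add_sigNeg_add_radical (Q := Q)
    omega

lemma sigNeg_add_le (Q Q' : QuadraticForm 𝕜 E) : sigNeg (Q + Q') ≤ sigNeg Q + sigNeg Q' := by
  obtain ⟨V, hVdim, hVneg⟩ := exists_finrank_eq_sigNeg_and_negDef (Q + Q')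
  obtain ⟨U, hU, hUdim⟩ := exists_nonneg_finrank_add_sigNeg_eq Q
  obtain ⟨U', hU', hU'dim⟩ := exists_nonneg_finrank_add_sigNeg_eq Q'
  have hdisj : Disjoint V (U ⊓ U') := by
    rw [Submodule.disjoint_def]
    rintro v hv ⟨hvU, hvU'⟩
    by_contra hne
    have := hVneg ⟨v, hv⟩ (by simpa using hne)
    simp only [QuadraticMap.restrict_apply, neg_apply, add_apply] at this
    linarith [hU v hvU, hU' v hvU']
  have h1 := Submodule.finrank_add_finrank_le_of_disjoint hdisj
  have h2 := Submodule.finrank_sup_add_finrank_inf_eq U U'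
  have h3 := (U ⊔ U').finrank_le
  omega

end QuadraticForm

lemma negIdx_eq_sigNeg {E : Type*} [AddCommGroup E] [Module ℝ E] [FiniteDimensional ℝ E]
    (Q : QuadraticForm ℝ E) : negIdx Q = sigNeg Q := by
  have hnegDef (V : Submodule ℝ E) :
      ((-Q).restrict V).PosDef ↔ ∀ v ∈ V, v ≠ 0 → Q v < 0 := by
    unfold QuadraticMap.PosDef
    simp
  exact IsGreatest.csSup_eq (by simpa only [hnegDef] using sigNeg_isGreatest Q)

section

open Submodule

variable {W : Type*} [AddCommGroup W] [Module ℝ W] (σ : W →ₗ[ℝ] W →ₗ[ℝ] ℝ)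

noncomputable def pairForm {Λ Λ' : Submodule ℝ W} (h : IsCompl Λ Λ') : QuadraticForm ℝ W :=
  LinearMap.BilinMap.toQuadraticMap
    ((σ ∘ₗ (LinearMap.id - Λ.projection Λ' h)).compl₂ (Λ.projection Λ' h))

lemma pairForm_add_of_mem {Λ Λ' : Submodule ℝ W} (h : IsCompl Λ Λ') {a c : W} (ha : a ∈ Λ)
    (hc : c ∈ Λ') : pairForm σ h (a + c) = σ c a := by
  have hproj : Λ.projection Λ' h (a + c) = a := by
    rw [map_add, projection_apply_of_mem_left h ha,
      (projection_apply_eq_zero_iff h).mpr hc, add_zero]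
  simp only [pairForm, LinearMap.BilinMap.toQuadraticMap_apply, LinearMap.compl₂_apply,
    LinearMap.comp_apply, LinearMap.sub_apply, LinearMap.id_apply, hproj, add_sub_cancel_left]

lemma indPi_eq_sigNeg_pairForm [FiniteDimensional ℝ W] (P Λ Λ' : Submodule ℝ W)
    (h : IsCompl Λ Λ') : indPi σ P Λ Λ' h = sigNeg ((pairForm σ h).comp P.subtype) := by
  rw [← negIdx_eq_sigNeg]
  rfl

noncomputable def triangleMap {P Λ₀ Λ₁ Λ₂ : Submodule ℝ W} (h02 : IsCompl Λ₀ Λ₂)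
    (hP1 : IsCompl P Λ₁) : P →ₗ[ℝ] P :=
  P.projectionOnto Λ₁ hP1 ∘ₗ Λ₀.projection Λ₂ h02 ∘ₗ P.subtype

variable {σ} {P Λ₀ Λ₁ Λ₂ : Submodule ℝ W}

lemma pairForm_comp_subtype_eq_add (hskew : ∀ x, σ x x = 0) (hP : P ≤ skewComplement σ P)
    (h01 : IsCompl Λ₀ Λ₁) (h02 : IsCompl Λ₀ Λ₂) (h12 : IsCompl Λ₁ Λ₂) (hP1 : IsCompl P Λ₁) :
    (pairForm σ h02).comp P.subtype =
      ((pairForm σ h01).comp P.subtype).comp (triangleMap h02 hP1) +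
        ((pairForm σ h12).comp P.subtype).comp (LinearMap.id - triangleMap h02 hP1) := by
  ext x
  set a := Λ₀.projection Λ₂ h02 x
  set y := P.projection Λ₁ hP1 a
  have ha : a ∈ Λ₀ := projection_apply_mem h02 x
  have hc : (x : W) - a ∈ Λ₂ := sub_projection_mem h02 x
  have hl : a - y ∈ Λ₁ := sub_projection_mem hP1 a
  have hq02 : pairForm σ h02 x = σ (x - a) a := by
    convert pairForm_add_of_mem σ h02 ha hc using 2; abel
  have hq01 : pairForm σ h01 y = σ (-(a - y)) a := by
    convert pairForm_add_of_mem σ h01 ha (neg_mem hl) using 2; abel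
  have hq12 : pairForm σ h12 (x - y) = σ (x - a) (a - y) := by
    convert pairForm_add_of_mem σ h12 hl hc using 2; abel
  have hxy : σ x y = 0 := hP x.2 y (projection_apply_mem hP1 a)
  show pairForm σ h02 x = pairForm σ h01 y + pairForm σ h12 (x - y)
  rw [hq02, hq01, hq12]
  have hanti := hskew (a + y)
  simp only [map_add, map_sub, map_neg, LinearMap.add_apply, LinearMap.sub_apply,
    LinearMap.neg_apply, hskew] at hanti ⊢
  linear_combination hxy - hanti

lemma triangleMap_injective (h02 : IsCompl Λ₀ Λ₂) (hP1 : IsCompl P Λ₁) (h01 : Disjoint Λ₀ Λ₁)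
    (hP2 : Disjoint P Λ₂) : Function.Injective (triangleMap h02 hP1) := by
  refine (injective_iff_map_eq_zero _).mpr fun x hx => ?_
  have ha : Λ₀.projection Λ₂ h02 x ∈ Λ₁ := (projectionOnto_apply_eq_zero_iff hP1).mp hx
  have ha0 : Λ₀.projection Λ₂ h02 x = 0 :=
    disjoint_def.mp h01 _ (projection_apply_mem h02 x) ha
  exact Subtype.ext <| disjoint_def.mp hP2 _ x.2 ((projection_apply_eq_zero_iff h02).mp ha0)

lemma sub_triangleMap_injective (h02 : IsCompl Λ₀ Λ₂) (hP1 : IsCompl P Λ₁)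
    (h12 : Disjoint Λ₁ Λ₂) (hP0 : Disjoint P Λ₀) :
    Function.Injective (LinearMap.id - triangleMap h02 hP1 : P →ₗ[ℝ] P) := by
  refine (injective_iff_map_eq_zero _).mpr fun x hx => ?_
  set a := Λ₀.projection Λ₂ h02 x
  set y := P.projection Λ₁ hP1 a
  have hxy : (x : W) - y = 0 := congrArg Subtype.val hx
  have hl : a - y ∈ Λ₂ := by
    rw [show a - y = ((x : W) - y) - ((x : W) - a) by abel, hxy, zero_sub]
    exact neg_mem (sub_projection_mem h02 x)
  have hl0 : a - y = 0 := disjoint_def.mp h12 _ (sub_projection_mem hP1 a) hl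
  have hxa : (x : W) = a := by
    rw [← sub_eq_zero, show (x : W) - a = ((x : W) - y) - (a - y) by abel, hxy, hl0, sub_zero]
  exact Subtype.ext <| disjoint_def.mp hP0 _ x.2 (hxa ▸ projection_apply_mem h02 x)

end

open QuadraticForm in
theorem indPi_triangle_general
    {W : Type*} [AddCommGroup W] [Module ℝ W] [FiniteDimensional ℝ W]
    (σ : W →ₗ[ℝ] W →ₗ[ℝ] ℝ)
    (hskew : ∀ x : W, σ x x = 0)
    (Pi₀ Λ₀ Λ₁ Λ₂ : Submodule ℝ W)
    (hP : Pi₀ = skewComplement σ Pi₀)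
    (h01 : IsCompl Λ₀ Λ₁) (h02 : IsCompl Λ₀ Λ₂) (h12 : IsCompl Λ₁ Λ₂)
    (hP0 : IsCompl Pi₀ Λ₀) (hP1 : IsCompl Pi₀ Λ₁) (hP2 : IsCompl Pi₀ Λ₂) :
    indPi σ Pi₀ Λ₀ Λ₂ h02 ≤ indPi σ Pi₀ Λ₀ Λ₁ h01 + indPi σ Pi₀ Λ₁ Λ₂ h12 := by
  simp only [indPi_eq_sigNeg_pairForm]
  rw [pairForm_comp_subtype_eq_add hskew hP.le h01 h02 h12 hP1]
  exact (sigNeg_add_le _ _).trans <| add_le_add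
    (sigNeg_comp_le_of_injective _ (triangleMap_injective h02 hP1 h01.disjoint hP2.disjoint))
    (sigNeg_comp_le_of_injective _ (sub_triangleMap_injective h02 hP1 h12.disjoint hP0.disjoint))

/-- triangle inequality:
`Ind_Pi₀(Λ₀,Λ₂) ≤ Ind_Pi₀(Λ₀,Λ₁) + Ind_Pi₀(Λ₁,Λ₂)`. -/
theorem indPi_triangle
    {W : Type*} [AddCommGroup W] [Module ℝ W] [FiniteDimensional ℝ W]
    (σ : W →ₗ[ℝ] W →ₗ[ℝ] ℝ)
    (hskew : ∀ x : W, σ x x = 0)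
    (hnondeg : ∀ x : W, (∀ y : W, σ x y = 0) → x = 0)
    (Pi₀ Λ₀ Λ₁ Λ₂ : Submodule ℝ W)
    (hP : Pi₀ = skewComplement σ Pi₀)
    (hL₀ : Λ₀ = skewComplement σ Λ₀)
    (hL₁ : Λ₁ = skewComplement σ Λ₁)
    (hL₂ : Λ₂ = skewComplement σ Λ₂)
    (h01 : IsCompl Λ₀ Λ₁) (h02 : IsCompl Λ₀ Λ₂) (h12 : IsCompl Λ₁ Λ₂)
    (hP0 : IsCompl Pi₀ Λ₀) (hP1 : IsCompl Pi₀ Λ₁) (hP2 : IsCompl Pi₀ Λ₂) :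
    indPi σ Pi₀ Λ₀ Λ₂ h02 ≤ indPi σ Pi₀ Λ₀ Λ₁ h01 + indPi σ Pi₀ Λ₁ Λ₂ h12 :=
  indPi_triangle_general σ hskew Pi₀ Λ₀ Λ₁ Λ₂ hP h01 h02 h12 hP0 hP1 hP2
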